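/- Let K_n be the complete graph on n vertices, n ≥ 2, and let m ≥ 1 be a real number (dimension parameter). Then for every function f on the vertices and every vertex x, Γ₂(f,f)(x) ≥ (1/m)(Δf(x))² + ((4−n)/(2(n−1)) + (m−2)/m)·Γ(f,f)(x). Moreover, for every fixed m the curvature constant (4−n)/(2(n−1)) + (m−2)/m is optimal: there exists a function f with Γ(f,f)(x) ≠ 0 for which equality holds. -/

import Mathlib

open SimpleGraph Finset

variable {V : Type*}

/-- The probability measure attached to a vertex `x`: uniform on its neighbors. -/
noncomputable def nbrMeasure (G : SimpleGraph V) [G.LocallyFinite] [DecidableRel G.Adj]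
    (x z : V) : ℝ :=
  if G.Adj x z then ((G.degree x : ℝ))⁻¹ else 0

/-- A coupling (transfer plan) between the measures `m_x` and `m_y`. -/
def IsCoupling (G : SimpleGraph V) [G.LocallyFinite] [DecidableRel G.Adj]
    (x y : V) (ξ : V → V → ℝ) : Prop :=
  (∀ u v, 0 ≤ ξ u v) ∧
  (∀ u v, ξ u v ≠ 0 → G.Adj x u ∧ G.Adj y v) ∧
  (∀ u, ∑ v ∈ G.neighborFinset y, ξ u v = nbrMeasure G x u) ∧
  (∀ v, ∑ u ∈ G.neighborFinset x, ξ u v = nbrMeasure G y v)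

/-- The transportation distance `W₁(m_x, m_y)`. -/
noncomputable def W1 (G : SimpleGraph V) [G.LocallyFinite] [DecidableRel G.Adj]
    (x y : V) : ℝ :=
  sInf { c : ℝ | ∃ ξ : V → V → ℝ, IsCoupling G x y ξ ∧
    c = ∑ u ∈ G.neighborFinset x, ∑ v ∈ G.neighborFinset y, (G.dist u v : ℝ) * ξ u v }

/-- Ollivier's Ricci curvature `κ(x,y) = 1 - W₁(m_x,m_y)/d(x,y)`. -/
noncomputable def ricci (G : SimpleGraph V) [G.LocallyFinite] [DecidableRel G.Adj]
    (x y : V) : ℝ :=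
  1 - W1 G x y / (G.dist x y : ℝ)

/-- Positive part of a real number: `a₊ = max a 0`. -/
noncomputable def posPart' (a : ℝ) : ℝ := max a 0

/-- `♯(x,y)`: the number of common neighbors of `x` and `y`. -/
def triangles (G : SimpleGraph V) [G.LocallyFinite] [DecidableEq V] (x y : V) : ℕ :=
  (G.neighborFinset x ∩ G.neighborFinset y).card

/-- The graph Laplacian `Δf(x) = (1/d_x)∑_{y∼x} f(y) - f(x)`. -/
noncomputable def lap (G : SimpleGraph V) [G.LocallyFinite] (f : V → ℝ) (x : V) : ℝ :=
  (G.degree x : ℝ)⁻¹ * ∑ y ∈ G.neighborFinset x, f y - f x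

/-- The Bakry–Émery operator `Γ(f,g)(x) = (1/2)(Δ(fg) - fΔg - gΔf)(x)`. -/
noncomputable def gam (G : SimpleGraph V) [G.LocallyFinite] (f g : V → ℝ) (x : V) : ℝ :=
  (1 / 2) * (lap G (f * g) x - f x * lap G g x - g x * lap G f x)

/-- The Bakry–Émery operator `Γ₂(f,f)(x) = (1/2)(ΔΓ(f,f) - 2Γ(f,Δf))(x)`. -/
noncomputable def gam2 (G : SimpleGraph V) [G.LocallyFinite] (f : V → ℝ) (x : V) : ℝ :=
  (1 / 2) * (lap G (gam G f f) x - 2 * gam G f (lap G f) x)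

/-!
On `K_n` we have `Δf = c - (n/(n-1)) f` for a constant `c`, so `Γ(f,Δf) = -(n/(n-1)) Γ(f,f)`;
moreover `∑_y Γ(f,f)(y)` is `2n Γ(f,f)(x) - (n-1)(Δf(x))²` for every `x`. Together these give
`Γ₂(f,f) = (3n/(2(n-1))) Γ(f,f) - (Δf)²/2`, and hence
`Γ₂(f,f) - (1/m)(Δf)² - K Γ(f,f) = ((m+2)/(2m)) (2Γ(f,f) - (Δf)²)` for the stated constant `K`.
The bracket is nonnegative by Cauchy–Schwarz over the neighbours of `x`, and vanishes when `f`
is constant on them (an indicator of `x`), while `Γ(f,f)(x) ≠ 0`.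
-/

section LocallyFinite

variable (G : SimpleGraph V) [G.LocallyFinite] {x : V}

lemma lap_eq_sum_sub (hx : G.degree x ≠ 0) (f : V → ℝ) :
    lap G f x = (G.degree x : ℝ)⁻¹ * ∑ y ∈ G.neighborFinset x, (f y - f x) := by
  rw [lap, sum_sub_distrib, sum_const, card_neighborFinset_eq_degree, nsmul_eq_mul]
  field_simp

lemma gam_eq_sum_mul (hx : G.degree x ≠ 0) (f g : V → ℝ) :
    gam G f g x =
      (2 * G.degree x : ℝ)⁻¹ * ∑ y ∈ G.neighborFinset x, (f y - f x) * (g y - g x) := by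
  have hsplit : ∀ y, (f y - f x) * (g y - g x) =
      ((f * g) y - (f * g) x) - f x * (g y - g x) - g x * (f y - f x) := by
    intro y; simp only [Pi.mul_apply]; ring
  simp only [gam, lap_eq_sum_sub G hx, hsplit, sum_sub_distrib, ← mul_sum]
  ring

lemma sq_lap_le_two_mul_gam (hx : G.degree x ≠ 0) (f : V → ℝ) :
    lap G f x ^ 2 ≤ 2 * gam G f f x := by
  have hcs := sq_sum_le_card_mul_sum_sq (s := G.neighborFinset x) (f := fun y => f y - f x)
  rw [card_neighborFinset_eq_degree] at hcs
  rw [lap_eq_sum_sub G hx, gam_eq_sum_mul G hx]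
  field_simp
  exact hcs

lemma lap_eq_of_forall_adj (hx : G.degree x ≠ 0) {f : V → ℝ} {c : ℝ}
    (hc : ∀ y, G.Adj x y → f y = c) : lap G f x = c - f x := by
  rw [lap_eq_sum_sub G hx, sum_congr rfl fun y hy => by rw [hc y ((G.mem_neighborFinset x y).1 hy)]]
  simp only [sum_sub_distrib, sum_const, card_neighborFinset_eq_degree, nsmul_eq_mul]
  field_simp

lemma gam_self_eq_of_forall_adj (hx : G.degree x ≠ 0) {f : V → ℝ} {c : ℝ}
    (hc : ∀ y, G.Adj x y → f y = c) : gam G f f x = (c - f x) ^ 2 / 2 := by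
  rw [gam_eq_sum_mul G hx, sum_congr rfl fun y hy => by rw [hc y ((G.mem_neighborFinset x y).1 hy)]]
  simp only [sum_const, card_neighborFinset_eq_degree, nsmul_eq_mul]
  field_simp

lemma exists_gam_ne_zero_and_sq_lap_eq [DecidableEq V] (hx : G.degree x ≠ 0) :
    ∃ f : V → ℝ, gam G f f x ≠ 0 ∧ lap G f x ^ 2 = 2 * gam G f f x := by
  have hconst : ∀ y, G.Adj x y → (Pi.single x 1 : V → ℝ) y = 0 :=
    fun y hxy => Pi.single_eq_of_ne hxy.ne' 1
  refine ⟨Pi.single x 1, ?_, ?_⟩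
  · rw [gam_self_eq_of_forall_adj G hx hconst]
    norm_num
  · rw [lap_eq_of_forall_adj G hx hconst, gam_self_eq_of_forall_adj G hx hconst]
    ring

end LocallyFinite

lemma Fintype.sum_sub_sq {ι : Type*} [Fintype ι] (f : ι → ℝ) (a : ℝ) :
    ∑ z, (f z - a) ^ 2 = ∑ z, f z ^ 2 - 2 * a * ∑ z, f z + Fintype.card ι * a ^ 2 := by
  have hexpand : ∀ z, (f z - a) ^ 2 = f z ^ 2 - 2 * a * f z + a ^ 2 := fun z => by ring
  simp only [hexpand, sum_add_distrib, sum_sub_distrib, ← mul_sum, sum_const, card_univ,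
    nsmul_eq_mul]

section CompleteGraph

variable [Fintype V]

lemma Fintype.cast_card_sub_one_ne_zero [Nontrivial V] : (Fintype.card V : ℝ) - 1 ≠ 0 :=
  sub_ne_zero.2 (by exact_mod_cast Fintype.one_lt_card.ne')

variable [DecidableEq V]

lemma cast_degree_top (x : V) :
    ((⊤ : SimpleGraph V).degree x : ℝ) = Fintype.card V - 1 := by
  rw [← card_neighborFinset_eq_degree, neighborFinset_top, card_compl, card_singleton,
    Nat.cast_pred (Fintype.card_pos_iff.2 ⟨x⟩)]

variable [Nontrivial V]

lemma degree_top_ne_zero (x : V) : (⊤ : SimpleGraph V).degree x ≠ 0 := by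
  rw [← card_neighborFinset_eq_degree, neighborFinset_top, card_compl, card_singleton]
  have := Fintype.one_lt_card (α := V)
  omega

lemma lap_top (f : V → ℝ) (x : V) :
    lap ⊤ f x = ((Fintype.card V : ℝ) - 1)⁻¹ * (∑ y, f y - Fintype.card V * f x) := by
  have := Fintype.cast_card_sub_one_ne_zero (V := V)
  rw [lap, neighborFinset_top, cast_degree_top, ← sum_compl_add_sum {x}, sum_singleton]
  field_simp
  ring

lemma gam_top (f g : V → ℝ) (x : V) :
    gam ⊤ f g x = (2 * ((Fintype.card V : ℝ) - 1))⁻¹ * ∑ y, (f y - f x) * (g y - g x) := by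
  rw [gam_eq_sum_mul _ (degree_top_ne_zero x), cast_degree_top, neighborFinset_top,
    ← sum_compl_add_sum {x}, sum_singleton, sub_self, zero_mul, add_zero]

lemma gam_lap_top (f : V → ℝ) (x : V) :
    gam ⊤ f (lap ⊤ f) x = -(Fintype.card V / ((Fintype.card V : ℝ) - 1)) * gam ⊤ f f x := by
  simp only [gam_top, lap_top, mul_sum]
  exact sum_congr rfl fun y _ => by ring

lemma sum_gam_top (f : V → ℝ) (x : V) :
    ∑ y, gam ⊤ f f y =
      2 * Fintype.card V * gam ⊤ f f x - ((Fintype.card V : ℝ) - 1) * lap ⊤ f x ^ 2 := by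
  have := Fintype.cast_card_sub_one_ne_zero (V := V)
  simp only [gam_top, lap_top, ← sq, Fintype.sum_sub_sq, ← mul_sum, ← sum_mul, sum_add_distrib,
    sum_sub_distrib, sum_const, card_univ, nsmul_eq_mul]
  field_simp
  ring

lemma gam2_top (f : V → ℝ) (x : V) :
    gam2 ⊤ f x =
      3 * Fintype.card V / (2 * ((Fintype.card V : ℝ) - 1)) * gam ⊤ f f x - lap ⊤ f x ^ 2 / 2 := by
  have := Fintype.cast_card_sub_one_ne_zero (V := V)
  rw [gam2, lap_top (gam ⊤ f f), sum_gam_top f x, gam_lap_top]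
  field_simp
  ring

lemma gam2_top_eq_cd_add {m : ℝ} (hm : m ≠ 0) (f : V → ℝ) (x : V) :
    gam2 ⊤ f x =
      (1 / m) * lap ⊤ f x ^ 2 +
        ((4 - (Fintype.card V : ℝ)) / (2 * ((Fintype.card V : ℝ) - 1)) + (m - 2) / m) *
          gam ⊤ f f x +
        (m + 2) / (2 * m) * (2 * gam ⊤ f f x - lap ⊤ f x ^ 2) := by
  have := Fintype.cast_card_sub_one_ne_zero (V := V)
  rw [gam2_top]
  field_simp
  ring

end CompleteGraph

theorem CD_complete_graph_dimension (n : ℕ) (hn : 2 ≤ n) (m : ℝ) (hm : 1 ≤ m) :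
    (∀ (f : Fin n → ℝ) (x : Fin n),
      gam2 (⊤ : SimpleGraph (Fin n)) f x ≥
        (1 / m) * (lap (⊤ : SimpleGraph (Fin n)) f x) ^ 2 +
          ((4 - (n : ℝ)) / (2 * ((n : ℝ) - 1)) + (m - 2) / m) *
            gam (⊤ : SimpleGraph (Fin n)) f f x) ∧
    (∀ x : Fin n, ∃ f : Fin n → ℝ,
      gam (⊤ : SimpleGraph (Fin n)) f f x ≠ 0 ∧
      gam2 (⊤ : SimpleGraph (Fin n)) f x =
        (1 / m) * (lap (⊤ : SimpleGraph (Fin n)) f x) ^ 2 +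
          ((4 - (n : ℝ)) / (2 * ((n : ℝ) - 1)) + (m - 2) / m) *
            gam (⊤ : SimpleGraph (Fin n)) f f x) := by
  have : Nontrivial (Fin n) := Fin.nontrivial_iff_two_le.2 hn
  have hm0 : 0 < m := by linarith
  have hcd (f : Fin n → ℝ) (x : Fin n) := Fintype.card_fin n ▸ gam2_top_eq_cd_add hm0.ne' f x
  refine ⟨fun f x => ?_, fun x => ?_⟩
  · rw [hcd, ge_iff_le, le_add_iff_nonneg_right]
    exact mul_nonneg (by positivity)
      (sub_nonneg.2 (sq_lap_le_two_mul_gam _ (degree_top_ne_zero x) f))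
  · obtain ⟨f, hgam, hsq⟩ := exists_gam_ne_zero_and_sq_lap_eq _ (degree_top_ne_zero x)
    refine ⟨f, hgam, ?_⟩
    rw [hcd, hsq, sub_self, mul_zero, add_zero]
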